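/- arXiv:2308.08940 — 6 statements merged into one kernel-verified Lean document; each statement's English description precedes it below -/
import Mathlib

section
/- Let n be a positive integer and k : Fin n → ℝ a family of real numbers such that k i < 1 for every i and ∑ i, k i = 2. Then there exists a finset I of Fin n such that |1 − ∑_{i ∈ I} k i| ≤ 1/3; equivalently, some subset sum of the family lies in the closed interval [2/3, 4/3]. (In particular the curvature gap of any flat sphere is at most 1/3.) -/
/-- Lemma 2.2 (first part): for any family of discrete curvatures `k i < 1`
summing to `2`, some subset sum lies within `1/3` of `1`; in particular the
curvature gap of any flat sphere is at most `1/3`. -/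
theorem curvature_gap_le_one_third (n : ℕ) (hn : 0 < n) (k : Fin n → ℝ)
    (hlt : ∀ i, k i < 1) (hsum : ∑ i, k i = 2) :
    ∃ I : Finset (Fin n), |1 - ∑ i ∈ I, k i| ≤ 1 / 3 := by
  by_contra hcon
  push_neg at hcon
  -- T : subsets with sum ≤ 4/3
  set T : Finset (Finset (Fin n)) :=
    Finset.univ.filter (fun I => ∑ i ∈ I, k i ≤ 4 / 3) with hT
  have hne : T.Nonempty := ⟨∅, by simp [hT]; norm_num⟩
  obtain ⟨I, hIT, hmax⟩ := T.exists_max_image (fun I => ∑ i ∈ I, k i) hne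
  have hIle : ∑ i ∈ I, k i ≤ 4 / 3 := by
    have := hIT; simp [hT] at this; exact this
  -- sum over I is < 2/3
  have hs : ∑ i ∈ I, k i < 2 / 3 := by
    have h1 := hcon I
    rcases lt_abs.mp h1 with h | h
    · linarith
    · linarith
  -- there is j ∉ I with k j > 0
  have hcompl : ∑ i ∈ Iᶜ, k i = 2 - ∑ i ∈ I, k i := by
    have := Finset.sum_add_sum_compl I k
    rw [hsum] at this
    linarith
  have hj : ∃ j ∈ Iᶜ, 0 < k j := by
    by_contra hno
    push_neg at hno
    have : ∑ i ∈ Iᶜ, k i ≤ 0 := Finset.sum_nonpos hno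
    linarith
  obtain ⟨j, hjc, hjpos⟩ := hj
  have hjI : j ∉ I := Finset.mem_compl.mp hjc
  -- singleton {j} has sum < 2/3
  have hj23 : k j < 2 / 3 := by
    have h1 := hcon {j}
    simp only [Finset.sum_singleton] at h1
    rcases lt_abs.mp h1 with h | h
    · linarith
    · linarith [hlt j]
  -- insert j I contradicts maximality
  have hins : ∑ i ∈ insert j I, k i = k j + ∑ i ∈ I, k i :=
    Finset.sum_insert hjI
  have hmem : insert j I ∈ T := by
    simp only [hT, Finset.mem_filter, Finset.mem_univ, true_and, hins]
    linarith
  have := hmax (insert j I) hmem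
  simp only [hins] at this
  linarith
end

section
/- Let n be a positive integer and k : Fin n → ℝ a family of real numbers such that k i < 1 for every i, ∑ i, k i = 2, and such that no subset sum lies in the open interval (2/3, 4/3), i.e. for every finset I of Fin n, ∑_{i ∈ I} k i ∉ (2/3, 4/3). Then every strictly positive member of the family equals 2/3: for every i, if k i > 0 then k i = 2/3. -/
/-- Equality case of Lemma 2.2 (intermediate claim): if no subset sum of the
discrete curvatures lies in the open interval `(2/3, 4/3)`, then every
strictly positive curvature equals `2/3`. -/
theorem pos_curvature_eq_two_thirds (n : ℕ) (hn : 0 < n) (k : Fin n → ℝ)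
    (hlt : ∀ i, k i < 1) (hsum : ∑ i, k i = 2)
    (hgap : ∀ I : Finset (Fin n), ∑ i ∈ I, k i ∉ Set.Ioo (2 / 3 : ℝ) (4 / 3)) :
    ∀ i, 0 < k i → k i = 2 / 3 := by
  -- singleton bound: every positive curvature is ≤ 2/3
  have hle : ∀ i, 0 < k i → k i ≤ 2 / 3 := by
    intro i hi
    by_contra h
    push_neg at h
    exact hgap {i} (by
      simp only [Finset.sum_singleton, Set.mem_Ioo]
      exact ⟨h, lt_trans (hlt i) (by norm_num)⟩)
  -- the set of positive indices
  set P : Finset (Fin n) := Finset.univ.filter (fun i => 0 < k i) with hPdef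
  have hPsum : (2 : ℝ) ≤ ∑ i ∈ P, k i := by
    have hsplit : ∑ i ∈ P, k i + ∑ i ∈ Pᶜ, k i = 2 := by
      rw [Finset.sum_add_sum_compl]; exact hsum
    have hneg : ∑ i ∈ Pᶜ, k i ≤ 0 := by
      apply Finset.sum_nonpos
      intro i hi
      simp only [hPdef, Finset.mem_compl, Finset.mem_filter, Finset.mem_univ,
        true_and, not_lt] at hi
      exact hi
    linarith
  -- maximal subset of P with sum ≤ 2/3
  set S : Finset (Finset (Fin n)) :=
    P.powerset.filter (fun I => ∑ i ∈ I, k i ≤ 2 / 3) with hSdef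
  have hemp : (∅ : Finset (Fin n)) ∈ S := by
    simp only [hSdef, Finset.mem_filter, Finset.mem_powerset]
    refine ⟨Finset.empty_subset _, by norm_num⟩
  obtain ⟨A, hAS, hAmax⟩ := S.exists_max_image (fun I => ∑ i ∈ I, k i) ⟨∅, hemp⟩
  simp only [hSdef, Finset.mem_filter, Finset.mem_powerset] at hAS
  obtain ⟨hAP, hAle⟩ := hAS
  -- There is a positive index outside A
  have hex : ∃ j ∈ P, j ∉ A := by
    by_contra h
    push_neg at h
    have : P ⊆ A := h
    have : P = A := Finset.Subset.antisymm this hAP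
    rw [this] at hPsum
    linarith
  obtain ⟨j, hjP, hjA⟩ := hex
  have hjpos : 0 < k j := by
    simpa [hPdef] using hjP
  -- sum of insert j A exceeds 2/3 (else contradicts maximality), hence ≥ 4/3
  have hins : ∑ i ∈ insert j A, k i = k j + ∑ i ∈ A, k i :=
    Finset.sum_insert hjA
  have hgt : 2 / 3 < k j + ∑ i ∈ A, k i := by
    by_contra h
    push_neg at h
    have hmem : insert j A ∈ S := by
      simp only [hSdef, Finset.mem_filter, Finset.mem_powerset]
      exact ⟨Finset.insert_subset hjP hAP, by rw [hins]; exact h⟩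
    have := hAmax _ hmem
    rw [hins] at this
    linarith
  have hge : 4 / 3 ≤ k j + ∑ i ∈ A, k i := by
    by_contra h
    push_neg at h
    exact hgap (insert j A) (by rw [hins]; exact ⟨hgt, h⟩)
  have hkj : k j = 2 / 3 := le_antisymm (hle j hjpos) (by linarith [hle j hjpos])
  have hAsum : ∑ i ∈ A, k i = 2 / 3 := by
    have := hle j hjpos
    linarith
  -- now conclude
  intro i hi
  by_contra hne
  have hilt : k i < 2 / 3 := lt_of_le_of_ne (hle i hi) hne
  by_cases hiA : i ∈ A
  · -- use B = insert j (A.erase i)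
    have hiAerase : j ∉ A.erase i := fun h => hjA (Finset.mem_of_mem_erase h)
    have hBsum : ∑ x ∈ insert j (A.erase i), k x = 4 / 3 - k i := by
      rw [Finset.sum_insert hiAerase, Finset.sum_erase_eq_sub hiA, hAsum, hkj]
      ring
    exact hgap (insert j (A.erase i)) (by
      rw [hBsum]
      constructor <;> linarith)
  · -- use insert i A
    have hsumi : ∑ x ∈ insert i A, k x = k i + 2 / 3 := by
      rw [Finset.sum_insert hiA, hAsum]
    exact hgap (insert i A) (by
      rw [hsumi]
      constructor <;> linarith)
end

section
/- Let n be a positive integer and k : Fin n → ℝ a family of real numbers such that k i < 1 for every i, ∑ i, k i = 2, and such that for every finset I of Fin n the subset sum ∑_{i ∈ I} k i does not lie in the open interval (2/3, 4/3). Then every member of the family is an integer multiple of 2/3: for every i there exists an integer m with k i = (2/3) · m. -/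
/-!
Rescale by `3/2`: the values `x i` now sum to `3`, are `< 3/2`, and no subset sum lies in `(1, 2)`.
A singleton shows `x i ≤ 1`. Subset sums of elements bounded by `1` cannot jump over a window of
length `1`, so the other elements contain a subset `T` summing into `[1, 2)`, hence to exactly `1`;
if `0 < x j < 1` then `T ∪ {j}` sums into `(1, 2)`, so every positive `x j` equals `1`. For
`x j ≤ 0`, a set of `1`'s lifts `x j` into `[1, 2)`, hence to exactly `1`, so `x j` is an integer.
-/

open Finset

theorem Finset.exists_subset_sum_mem_Ico {ι M : Type*} [DecidableEq ι] [AddCommGroup M]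
    [LinearOrder M] [IsOrderedAddMonoid M] {s : Finset ι} {f : ι → M} {a c : M}
    (hf : ∀ i ∈ s, f i ≤ c) (hac : 0 < a + c) (ha : a ≤ ∑ i ∈ s, f i) :
    ∃ t ⊆ s, ∑ i ∈ t, f i ∈ Set.Ico a (a + c) := by
  induction s using Finset.induction_on with
  | empty => exact ⟨∅, subset_rfl, by simpa using ha, by simpa using hac⟩
  | insert i s hi ih =>
    by_cases htop : ∑ j ∈ insert i s, f j < a + c
    · exact ⟨insert i s, subset_rfl, ha, htop⟩
    have hs : a ≤ ∑ j ∈ s, f j := by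
      rw [sum_insert hi, not_lt] at htop
      have hfi := hf i (mem_insert_self i s)
      exact le_of_add_le_add_right (htop.trans (by rw [add_comm]; gcongr))
    obtain ⟨t, hts, ht⟩ := ih (fun j hj => hf j (mem_insert_of_mem hj)) hs
    exact ⟨t, hts.trans (subset_insert i s), ht⟩

section GapOneTwo

variable {ι : Type*} {x : ι → ℝ}

theorem le_one_of_sum_notMem_Ioo_one_two (hgap : ∀ I : Finset ι, ∑ i ∈ I, x i ∉ Set.Ioo 1 2)
    {i : ι} (hi : x i < 2) : x i ≤ 1 := by
  by_contra! h
  exact hgap {i} (by simpa using ⟨h, hi⟩)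

variable [Fintype ι] [DecidableEq ι]

theorem eq_one_of_pos_of_sum_notMem_Ioo_one_two
    (hgap : ∀ I : Finset ι, ∑ i ∈ I, x i ∉ Set.Ioo 1 2) (hsum : ∑ i, x i = 3)
    (hle : ∀ i, x i ≤ 1) {j : ι} (hj : 0 < x j) : x j = 1 := by
  by_contra hne
  have hj1 : x j < 1 := (hle j).lt_of_ne hne
  obtain ⟨T, hTsub, hT1, hT2⟩ := exists_subset_sum_mem_Ico (s := univ.erase j) (a := 1) (c := 1)
    (fun i _ => hle i) (by norm_num) (by linarith [sum_erase_eq_sub (f := x) (mem_univ j)])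
  have hT : ∑ i ∈ T, x i = 1 := by
    by_contra h
    exact hgap T ⟨hT1.lt_of_ne' h, by linarith⟩
  have hjT : j ∉ T := fun h => notMem_erase j univ (hTsub h)
  exact hgap (insert j T) (by rw [sum_insert hjT, hT]; constructor <;> linarith)

theorem exists_int_eq_of_sum_notMem_Ioo_one_two
    (hgap : ∀ I : Finset ι, ∑ i ∈ I, x i ∉ Set.Ioo 1 2) (hsum : ∑ i, x i = 3)
    (hle : ∀ i, x i ≤ 1) (j : ι) : ∃ m : ℤ, x j = m := by
  rcases le_or_gt (x j) 0 with hj | hj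
  swap
  · exact ⟨1, by simp [eq_one_of_pos_of_sum_notMem_Ioo_one_two hgap hsum hle hj]⟩
  set P := (univ.erase j).filter (fun i => 0 < x i)
  have hP : 1 - x j ≤ ∑ i ∈ P, x i := by
    have hneg : ∑ i ∈ (univ.erase j).filter (fun i => ¬ 0 < x i), x i ≤ 0 :=
      sum_nonpos fun i hi => not_lt.mp (mem_filter.mp hi).2
    linarith [sum_filter_add_sum_filter_not (univ.erase j) (fun i => 0 < x i) x,
      sum_erase_eq_sub (f := x) (mem_univ j)]
  obtain ⟨T, hTP, hT1, hT2⟩ := exists_subset_sum_mem_Ico (s := P) (a := 1 - x j) (c := 1)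
    (fun i _ => hle i) (by linarith) hP
  have hTcard : ∑ i ∈ T, x i = #T := by
    rw [sum_congr rfl fun i hi => eq_one_of_pos_of_sum_notMem_Ioo_one_two hgap hsum hle
      (mem_filter.mp (hTP hi)).2]
    simp
  rw [hTcard] at hT1 hT2
  have hjT : j ∉ T := fun h => notMem_erase j univ (mem_filter.mp (hTP h)).1
  have hjT1 : x j + #T = 1 := by
    by_contra h
    refine hgap (insert j T) ?_
    rw [sum_insert hjT, hTcard]
    exact ⟨(Ne.symm h).lt_of_le (by linarith), by linarith⟩
  exact ⟨1 - #T, by push_cast; linarith⟩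

end GapOneTwo

theorem curvature_int_multiple_two_thirds_general (n : ℕ) (k : Fin n → ℝ)
    (hlt : ∀ i, k i < 1) (hsum : ∑ i, k i = 2)
    (hgap : ∀ I : Finset (Fin n), ∑ i ∈ I, k i ∉ Set.Ioo (2 / 3 : ℝ) (4 / 3)) :
    ∀ i, ∃ m : ℤ, k i = (2 / 3) * m := by
  set x : Fin n → ℝ := fun i => 3 / 2 * k i
  have hsum_mul (I : Finset (Fin n)) : ∑ i ∈ I, x i = 3 / 2 * ∑ i ∈ I, k i := by
    rw [mul_sum]
  have hgap' (I : Finset (Fin n)) : ∑ i ∈ I, x i ∉ Set.Ioo 1 2 := by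
    rw [hsum_mul]
    rintro ⟨h1, h2⟩
    exact hgap I ⟨by linarith, by linarith⟩
  have hsum' : ∑ i, x i = 3 := by rw [hsum_mul, hsum]; norm_num
  have hle (i : Fin n) : x i ≤ 1 :=
    le_one_of_sum_notMem_Ioo_one_two hgap' (show 3 / 2 * k i < 2 by linarith [hlt i])
  intro i
  obtain ⟨m, hm⟩ := exists_int_eq_of_sum_notMem_Ioo_one_two hgap' hsum' hle i
  exact ⟨m, by linarith [show 3 / 2 * k i = m from hm]⟩

/-- Equality case of Lemma 2.2 (forward direction): if no subset sum of the
discrete curvatures lies in the open interval `(2/3, 4/3)`, then every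
curvature is an integer multiple of `2/3`. -/
theorem curvature_int_multiple_two_thirds (n : ℕ) (hn : 0 < n) (k : Fin n → ℝ)
    (hlt : ∀ i, k i < 1) (hsum : ∑ i, k i = 2)
    (hgap : ∀ I : Finset (Fin n), ∑ i ∈ I, k i ∉ Set.Ioo (2 / 3 : ℝ) (4 / 3)) :
    ∀ i, ∃ m : ℤ, k i = (2 / 3) * m :=
  curvature_int_multiple_two_thirds_general n k hlt hsum hgap
end

section
/- Let n be a positive integer and k : Fin n → ℝ a family of real numbers such that k i < 1 for every i, ∑ i, k i = 2, and every k i is an integer multiple of 2/3 (for every i there is an integer m with k i = (2/3) · m). Then the minimum over all finsets I of Fin n of |1 − ∑_{i ∈ I} k i| equals 1/3; that is, for every finset I one has |1 − ∑_{i ∈ I} k i| ≥ 1/3, and there exists a finset I with |1 − ∑_{i ∈ I} k i| = 1/3. -/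
/-- Equality case of Lemma 2.2 (converse direction): if all discrete curvatures
are integer multiples of `2/3` (and sum to `2`, each being `< 1`), then the
curvature gap equals `1/3`. -/
theorem curvature_gap_eq_one_third (n : ℕ) (hn : 0 < n) (k : Fin n → ℝ)
    (hlt : ∀ i, k i < 1) (hsum : ∑ i, k i = 2)
    (hmul : ∀ i, ∃ m : ℤ, k i = (2 / 3) * m) :
    (∀ I : Finset (Fin n), 1 / 3 ≤ |1 - ∑ i ∈ I, k i|) ∧
      ∃ I : Finset (Fin n), |1 - ∑ i ∈ I, k i| = 1 / 3 := by
  choose m hm using hmul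
  have hm1 : ∀ i, m i ≤ 1 := by
    intro i
    by_contra h
    push_neg at h
    have h2 : (2 : ℝ) ≤ (m i : ℝ) := by exact_mod_cast h
    have := hlt i
    rw [hm i] at this
    nlinarith
  have hmsum : ∑ i, m i = 3 := by
    have h1 : ∑ i, k i = (2 / 3 : ℝ) * (∑ i, (m i : ℝ)) := by
      rw [Finset.mul_sum]
      exact Finset.sum_congr rfl fun i _ => hm i
    rw [hsum] at h1
    have h2 : ((∑ i, m i : ℤ) : ℝ) = 3 := by push_cast; linarith
    exact_mod_cast h2
  have hsumI : ∀ I : Finset (Fin n), ∑ i ∈ I, k i = (2 / 3) * ((∑ i ∈ I, m i : ℤ) : ℝ) := by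
    intro I
    push_cast
    rw [Finset.mul_sum]
    exact Finset.sum_congr rfl fun i _ => hm i
  have key : ∀ I : Finset (Fin n),
      |1 - ∑ i ∈ I, k i| = (|3 - 2 * (∑ i ∈ I, m i)| : ℤ) / 3 := by
    intro I
    rw [hsumI I]
    set M : ℤ := ∑ i ∈ I, m i
    have e : (1 : ℝ) - 2 / 3 * (M : ℝ) = ((3 - 2 * M : ℤ) : ℝ) / 3 := by push_cast; ring
    rw [e, abs_div, abs_of_pos (by norm_num : (0:ℝ) < 3)]
    rw [← Int.cast_abs]
  constructor
  · intro I
    rw [key I]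
    set M : ℤ := ∑ i ∈ I, m i
    have habs : (1 : ℤ) ≤ |3 - 2 * M| := Int.one_le_abs (by omega)
    have : (1 : ℝ) ≤ ((|3 - 2 * M| : ℤ) : ℝ) := by exact_mod_cast habs
    linarith
  · -- existence
    set g : ℕ → ℤ := fun i => if h : i < n then m ⟨i, h⟩ else 0 with hg
    have hg1 : ∀ i, g i ≤ 1 := by
      intro i
      simp only [hg]
      split
      · exact hm1 _
      · norm_num
    have hgn : ∑ i ∈ Finset.range n, g i = 3 := by
      rw [← Fin.sum_univ_eq_sum_range]
      rw [← hmsum]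
      exact Finset.sum_congr rfl fun i _ => by simp [hg, i.isLt]
    set S : ℕ → ℤ := fun j => ∑ i ∈ Finset.range j, g i with hS
    have hP : ∃ j, 1 ≤ S j := ⟨n, by rw [hS]; simp [hgn]⟩
    set j := Nat.find hP with hj
    have hj1 : 1 ≤ S j := Nat.find_spec hP
    have hj0 : j ≠ 0 := by
      intro h
      rw [h] at hj1
      simp [hS] at hj1
    have hjprev : ¬ 1 ≤ S (j - 1) := Nat.find_min hP (by omega)
    have hstep : S j = S (j - 1) + g (j - 1) := by
      conv_lhs => rw [show j = (j - 1) + 1 by omega]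
      rw [hS]
      exact Finset.sum_range_succ g (j - 1)
    have hSj : S j = 1 := by
      have := hg1 (j - 1)
      omega
    have hjn : j ≤ n := Nat.find_min' hP (by rw [hS]; simp [hgn])
    refine ⟨Finset.univ.filter (fun i => (i : ℕ) < j), ?_⟩
    have hMsum : ∑ i ∈ Finset.univ.filter (fun i : Fin n => (i : ℕ) < j), m i = 1 := by
      rw [Finset.sum_filter]
      have e1 : ∑ i : Fin n, (if (i : ℕ) < j then m i else 0)
          = ∑ i ∈ Finset.range n, (if i < j then g i else 0) := by
        rw [← Fin.sum_univ_eq_sum_range]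
        exact Finset.sum_congr rfl fun i _ => by simp [hg, i.isLt]
      rw [e1]
      have e2 : ∑ i ∈ Finset.range n, (if i < j then g i else 0)
          = ∑ i ∈ Finset.range j, (if i < j then g i else 0) := by
        refine (Finset.sum_subset (Finset.range_subset_range.mpr hjn) ?_).symm
        intro x _ hx
        rw [Finset.mem_range] at hx
        simp [hx]
      rw [e2]
      have e3 : ∑ i ∈ Finset.range j, (if i < j then g i else 0) = S j := by
        rw [hS]
        exact Finset.sum_congr rfl fun i hi => by
          rw [Finset.mem_range] at hi; simp [hi]
      rw [e3, hSj]
    rw [key, hMsum]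
    norm_num
end

section
/- Let V be a finite type with m elements, let G be a simple graph on V, and let r be a natural number with 2 ≤ r ≤ m. Suppose that every finset of V of cardinality r contains two distinct adjacent vertices. Then (m − 1)² ≤ r² · (number of edges of G); equivalently, m ≤ r · √(number of edges of G) + 1. -/
/-!
Count pairs `(S, e)` with `S` an `r`-set of vertices and `e` an edge inside `S`. Every `r`-set
contains an edge, and every edge lies in exactly `C(m-2, r-2)` of the `r`-sets, so
`C(m, r) ≤ C(m-2, r-2) |E|`. Since `C(m, r) C(r, 2) = C(m, 2) C(m-2, r-2)`, this says
`C(m, 2) ≤ C(r, 2) |E|`, i.e. `m(m-1) ≤ r(r-1) |E|`; conclude with `(m-1)² ≤ m(m-1)` and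
`r(r-1) ≤ r²`.
-/

open Finset

theorem Nat.mul_sub_one_eq_two_mul_choose_two (n : ℕ) : n * (n - 1) = 2 * n.choose 2 := by
  rw [Nat.choose_two_right, Nat.mul_div_cancel' (Nat.even_mul_pred_self n).two_dvd]

theorem Nat.sub_one_sq_le_sq_mul_of_choose_two_le {a b c : ℕ}
    (h : a.choose 2 ≤ b.choose 2 * c) : (a - 1) ^ 2 ≤ b ^ 2 * c :=
  calc (a - 1) ^ 2 ≤ a * (a - 1) := by rw [sq]; gcongr; exact Nat.sub_le a 1
    _ = 2 * a.choose 2 := a.mul_sub_one_eq_two_mul_choose_two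
    _ ≤ 2 * (b.choose 2 * c) := by gcongr
    _ = b * (b - 1) * c := by rw [b.mul_sub_one_eq_two_mul_choose_two]; ring
    _ ≤ b ^ 2 * c := by rw [sq]; gcongr; exact Nat.sub_le b 1

namespace SimpleGraph

variable {V : Type*} [Fintype V] (G : SimpleGraph V) [DecidableRel G.Adj] {r : ℕ}

theorem card_filter_mem_sym2_powersetCard_univ [DecidableEq V] {e : Sym2 V}
    (he : e ∈ G.edgeFinset) (hr : 2 ≤ r) :
    #{S ∈ powersetCard r univ | e ∈ S.sym2} = (Fintype.card V - 2).choose (r - 2) := by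
  induction e using Sym2.ind with
  | _ u v =>
    have hcard : #({u, v} : Finset V) = 2 := card_pair (G.ne_of_adj (by simpa using he))
    have hpair : ∀ S : Finset V, s(u, v) ∈ S.sym2 ↔ {u, v} ⊆ S := by
      simp [insert_subset_iff]
    simp_rw [hpair]
    rw [card_filter_powersetCard_subset _ _ _ (subset_univ _) (hcard ▸ hr), card_univ, hcard]

theorem choose_card_le_card_edgeFinset_mul_choose (hr : 2 ≤ r)
    (hcover : ∀ S : Finset V, #S = r → ∃ u ∈ S, ∃ v ∈ S, G.Adj u v) :
    (Fintype.card V).choose r ≤ #G.edgeFinset * (Fintype.card V - 2).choose (r - 2) := by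
  classical
  have hdouble := card_mul_le_card_mul (fun S e ↦ e ∈ S.sym2) (s := powersetCard r univ)
    (t := G.edgeFinset) (m := 1) (n := (Fintype.card V - 2).choose (r - 2))
    (fun S hS ↦ by
      obtain ⟨u, hu, v, hv, huv⟩ := hcover S (mem_powersetCard_univ.mp hS)
      exact card_pos.mpr ⟨s(u, v), by simp [mem_bipartiteAbove, hu, hv, huv]⟩)
    (fun e he ↦ (G.card_filter_mem_sym2_powersetCard_univ he hr).le)
  simpa using hdouble

theorem choose_two_le_choose_two_mul_card_edgeFinset (hr : 2 ≤ r) (hrV : r ≤ Fintype.card V)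
    (hcover : ∀ S : Finset V, #S = r → ∃ u ∈ S, ∃ v ∈ S, G.Adj u v) :
    (Fintype.card V).choose 2 ≤ r.choose 2 * #G.edgeFinset := by
  set n := Fintype.card V
  have hpos : 0 < (n - 2).choose (r - 2) := Nat.choose_pos (by omega)
  refine Nat.le_of_mul_le_mul_right ?_ hpos
  calc n.choose 2 * (n - 2).choose (r - 2) = n.choose r * r.choose 2 := (Nat.choose_mul hr).symm
    _ ≤ #G.edgeFinset * (n - 2).choose (r - 2) * r.choose 2 := by
      gcongr; exact G.choose_card_le_card_edgeFinset_mul_choose hr hcover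
    _ = r.choose 2 * #G.edgeFinset * (n - 2).choose (r - 2) := by ring

end SimpleGraph

theorem vertex_count_upper_bound_general (V : Type*) [Fintype V]
    (G : SimpleGraph V) [DecidableRel G.Adj] (m r : ℕ)
    (hm : Fintype.card V = m) (hr2 : 2 ≤ r) (hrm : r ≤ m)
    (hcover : ∀ S : Finset V, S.card = r →
      ∃ u ∈ S, ∃ v ∈ S, u ≠ v ∧ G.Adj u v) :
    (m - 1) ^ 2 ≤ r ^ 2 * G.edgeFinset.card := by
  subst hm
  refine Nat.sub_one_sq_le_sq_mul_of_choose_two_le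
    (G.choose_two_le_choose_two_mul_card_edgeFinset hr2 hrm fun S hS ↦ ?_)
  obtain ⟨u, hu, v, hv, -, huv⟩ := hcover S hS
  exact ⟨u, hu, v, hv, huv⟩

/-- The form of the double-counting bound used in Proposition 5.7: if every
`r`-subset of the `m` vertices contains two distinct adjacent vertices, then
`(m-1)² ≤ r² |E|`, i.e. `m ≤ r √|E| + 1`. -/
theorem vertex_count_upper_bound (V : Type*) [Fintype V] [DecidableEq V]
    (G : SimpleGraph V) [DecidableRel G.Adj] (m r : ℕ)
    (hm : Fintype.card V = m) (hr2 : 2 ≤ r) (hrm : r ≤ m)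
    (hcover : ∀ S : Finset V, S.card = r →
      ∃ u ∈ S, ∃ v ∈ S, u ≠ v ∧ G.Adj u v) :
    (m - 1) ^ 2 ≤ r ^ 2 * G.edgeFinset.card :=
  vertex_count_upper_bound_general V G m r hm hr2 hrm hcover
end

section
/- Let ρ, s, α be real numbers with ρ > 0, s > 0, 0 < α < π/2, and s < ρ · tan(α). Then log( (ρ·tan(α) + s) / (ρ·tan(α) − s) ) / (π − 2α) > s / ρ. -/
/-!
With `t = ρ tan α`, the series `log ((1 + x) / (1 - x)) = 2 (x + x³/3 + …)` at `x = s / t` gives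
`log ((t + s) / (t - s)) > 2 s / t`, while `tan β > β` at `β = π/2 - α` gives
`π - 2α < 2 / tan α = 2 ρ / t`. Multiplying the latter by `s / ρ` chains the two.
-/

open Real

lemma two_mul_lt_log_one_add_div_one_sub {x : ℝ} (hx₀ : 0 < x) (hx₁ : x < 1) :
    2 * x < log ((1 + x) / (1 - x)) := by
  have hseries := hasSum_log_sub_log_of_abs_lt_one (abs_lt.2 ⟨by linarith, hx₁⟩)
  have hpartial := sum_le_hasSum (Finset.range 2) (fun k _ => by positivity) hseries
  rw [log_div (by linarith) (by linarith)]
  norm_num [Finset.sum_range_succ] at hpartial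
  nlinarith [pow_pos hx₀ 3]

lemma two_mul_div_lt_log_add_div_sub {s t : ℝ} (hs : 0 < s) (hst : s < t) :
    2 * s / t < log ((t + s) / (t - s)) := by
  have ht : 0 < t := hs.trans hst
  have hratio : (t + s) / (t - s) = (1 + s / t) / (1 - s / t) := by
    field_simp
  rw [hratio, mul_div_assoc]
  exact two_mul_lt_log_one_add_div_one_sub (by positivity) ((div_lt_one ht).2 hst)

lemma pi_sub_two_mul_lt_two_div_tan {α : ℝ} (hα₀ : 0 < α) (hα₁ : α < π / 2) :
    π - 2 * α < 2 / tan α := by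
  have h := lt_tan (x := π / 2 - α) (by linarith) (by linarith)
  rw [tan_pi_div_two_sub] at h
  rw [div_eq_mul_inv]
  linarith

/-- The analytic content of the conformal modulus bound of Proposition 4.1. -/
theorem conformal_modulus_lower_bound (ρ s α : ℝ) (hρ : 0 < ρ) (hs : 0 < s)
    (hα0 : 0 < α) (hα1 : α < π / 2) (hlt : s < ρ * Real.tan α) :
    Real.log ((ρ * Real.tan α + s) / (ρ * Real.tan α - s)) / (π - 2 * α)
      > s / ρ := by
  have htan : 0 < tan α := tan_pos_of_pos_of_lt_pi_div_two hα0 hα1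
  have hθ : 0 < π - 2 * α := by linarith
  rw [gt_iff_lt, lt_div_iff₀ hθ]
  calc s / ρ * (π - 2 * α) < s / ρ * (2 / tan α) :=
        mul_lt_mul_of_pos_left (pi_sub_two_mul_lt_two_div_tan hα0 hα1) (by positivity)
    _ = 2 * s / (ρ * tan α) := by field_simp
    _ < log ((ρ * tan α + s) / (ρ * tan α - s)) := two_mul_div_lt_log_add_div_sub hs hlt
end
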